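/- arXiv:1203.5584 — 2 statements merged into one kernel-verified Lean document; each statement's English description precedes it below -/
import Mathlib

section
/- Let R be a commutative ring in which 2 is invertible and let S = R[c_1,...,c_i,c_1',...,c_i'] be a polynomial ring in 2i variables. Let φ: S → S be the R-algebra involution exchanging c_j and c_j' for all j. If f ∈ S satisfies f + φ(f) = 0, then f can be written as a sum f = Σ_{j=1}^i (c_j - c_j')·f_j where each f_j satisfies φ(f_j) = f_j. -/
open MvPolynomial

/-!
Collapsing every `c_j'` onto `c_j` kills exactly the ideal generated by the differences
`c_j - c_j'`, and it is invariant under `φ`; so it kills `f = -φ f` once `2` is invertible, and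
`f = ∑ (c_j - c_j') h_j`. Averaging this representation with its image under `φ`, which negates
both `f` and every `c_j - c_j'`, replaces each `h_j` by the `φ`-fixed `(h_j + φ h_j) / 2`.
-/

theorem MvPolynomial.algHom_sub_mem_of_forall_X {R A σ : Type*} [CommSemiring R] [CommRing A]
    [Algebra R A] {f g : MvPolynomial σ R →ₐ[R] A} {I : Ideal A}
    (h : ∀ v, f (X v) - g (X v) ∈ I) (p : MvPolynomial σ R) : f p - g p ∈ I := by
  rw [← Ideal.Quotient.eq, ← Ideal.Quotient.mkₐ_eq_mk R]
  exact DFunLike.congr_fun (algHom_ext fun v => Ideal.Quotient.eq.mpr (h v) :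
    (Ideal.Quotient.mkₐ R I).comp f = (Ideal.Quotient.mkₐ R I).comp g) p

theorem eq_sum_mul_invOf_two_smul_add_of_add_map_eq_zero {R A ι : Type*} [CommRing R]
    [Invertible (2 : R)] [CommRing A] [Algebra R A] [Fintype ι] (φ : A →ₐ[R] A)
    {d c : ι → A} (hd : ∀ j, φ (d j) = -d j) {f : A} (hf : f + φ f = 0)
    (hfc : f = ∑ j, d j * c j) :
    f = ∑ j, d j * (⅟2 : R) • (c j + φ (c j)) := by
  have hφf : φ f = ∑ j, -(d j * φ (c j)) := by
    simp only [hfc, map_sum, map_mul, hd, neg_mul]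
  calc f = (⅟2 : R) • f + (⅟2 : R) • f := (invOf_two_smul_add_invOf_two_smul R f).symm
    _ = (⅟2 : R) • (∑ j, d j * c j) + (⅟2 : R) • (-φ f) := by
        rw [neg_eq_of_add_eq_zero_left hf, ← hfc]
    _ = ∑ j, d j * (⅟2 : R) • (c j + φ (c j)) := by
        simp only [hφf, Finset.sum_neg_distrib, neg_neg, ← smul_add, ← Finset.sum_add_distrib,
          ← mul_add, Finset.smul_sum, mul_smul_comm]

section SumSwap

variable {R σ : Type*} [CommRing R]

theorem mem_span_X_inl_sub_X_inr_of_rename_elim_eq_zero {p : MvPolynomial (σ ⊕ σ) R}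
    (hp : rename (Sum.elim id id) p = 0) :
    p ∈ Ideal.span (Set.range fun j : σ => (X (Sum.inl j) - X (Sum.inr j) :
      MvPolynomial (σ ⊕ σ) R)) := by
  rw [← sub_zero p, ← map_zero (rename Sum.inl), ← hp]
  refine algHom_sub_mem_of_forall_X (f := AlgHom.id R _)
    (g := (rename Sum.inl).comp (rename (Sum.elim id id))) ?_ p
  rintro (j | j)
  · simp
  · simp only [AlgHom.coe_id, id_eq, AlgHom.coe_comp, Function.comp_apply, rename_X, Sum.elim_inr]
    rw [← neg_sub]
    exact neg_mem (Ideal.subset_span (Set.mem_range_self j))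

theorem rename_elim_eq_zero_of_add_rename_swap_eq_zero [Invertible (2 : R)]
    {f : MvPolynomial (σ ⊕ σ) R} (hf : f + rename Sum.swap f = 0) :
    rename (Sum.elim id id) f = 0 := by
  have h2 : (2 : R) • rename (Sum.elim id id) f = 0 := by
    rw [two_smul]
    simpa [rename_rename, Sum.elim_swap] using congrArg (rename (Sum.elim id id)) hf
  simpa using congrArg ((⅟2 : R) • ·) h2

end SumSwap

theorem antisymmetric_poly_in_difference_ideal
    (R : Type*) [CommRing R] [Invertible (2 : R)] (i : ℕ)
    (φ : MvPolynomial (Fin i ⊕ Fin i) R →ₐ[R] MvPolynomial (Fin i ⊕ Fin i) R)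
    (hφ : φ = rename (Sum.swap : Fin i ⊕ Fin i → Fin i ⊕ Fin i))
    (f : MvPolynomial (Fin i ⊕ Fin i) R)
    (hf : f + φ f = 0) :
    ∃ g : Fin i → MvPolynomial (Fin i ⊕ Fin i) R,
      (∀ j, φ (g j) = g j) ∧
      f = ∑ j : Fin i, (X (Sum.inl j) - X (Sum.inr j)) * g j := by
  subst hφ
  obtain ⟨c, hc⟩ := Ideal.mem_span_range_iff_exists_fun.mp
    (mem_span_X_inl_sub_X_inr_of_rename_elim_eq_zero
      (rename_elim_eq_zero_of_add_rename_swap_eq_zero hf))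
  have hφφ (p : MvPolynomial (Fin i ⊕ Fin i) R) : rename Sum.swap (rename Sum.swap p) = p := by
    simp [rename_rename]
  refine ⟨fun j => (⅟2 : R) • (c j + rename Sum.swap (c j)), fun j => ?_, ?_⟩
  · rw [map_smul, map_add, hφφ, add_comm]
  · refine eq_sum_mul_invOf_two_smul_add_of_add_map_eq_zero _ (fun j => ?_) hf ?_
    · simp
    · simp only [← hc, mul_comm]
end

section
/- Let q(z) ∈ Z[z] be a monic polynomial. Then for infinitely many primes p, the reduction of q modulo p splits into linear factors over Z/p. -/
/-!
Let `K` be the splitting field of `q` over `ℚ` and `θ` a primitive element of `K` that is an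
algebraic integer, with minimal polynomial `f ∈ ℤ[X]`. Every root `α` of `q` is a polynomial in
`θ` with rational coefficients, so for a common denominator `D` the roots `D • α` of
`q.scaleRoots D` lie in `ℤ[θ] ≅ ℤ[X]/(f)`, over which `q.scaleRoots D` therefore splits.
By Schur's theorem `f` has a root `t` modulo infinitely many primes `p`; for those with `p ∤ D`,
the ring map `ℤ[θ] → 𝔽_p`, `θ ↦ t`, carries this factorisation to one of `q.scaleRoots D` over
`𝔽_p`, and `D` is invertible there.
-/

open Polynomial

namespace Polynomial

theorem exists_eval_add_mul_ne_zero {R : Type*} [CommRing R] [IsDomain R] [Infinite R]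
    {P : R[X]} (hP : P ≠ 0) (x₀ : R) {a : R} (ha : a ≠ 0) : ∃ k, P.eval (x₀ + a * k) ≠ 0 := by
  by_contra! h
  refine hP (P.eq_zero_of_infinite_isRoot ((Set.infinite_range_of_injective
    ((add_right_injective x₀).comp (mul_right_injective₀ ha))).mono ?_))
  rintro _ ⟨k, rfl⟩
  exact h k

theorem exists_prime_not_dvd_dvd_eval (f : ℤ[X]) (hf : 0 < f.natDegree) {N : ℤ}
    (hN : N ≠ 0) : ∃ p : ℕ, p.Prime ∧ ¬ (p : ℤ) ∣ N ∧ ∃ n : ℤ, (p : ℤ) ∣ f.eval n := by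
  obtain ⟨x₀, ha⟩ := exists_eval_add_mul_ne_zero (ne_zero_of_natDegree_gt hf) 0 one_ne_zero
  rw [zero_add, one_mul] at ha
  set a := f.eval x₀
  have hg : f ^ 2 - C (a ^ 2) ≠ 0 := by
    intro h
    have := congrArg natDegree (sub_eq_zero.mp h)
    rw [natDegree_pow, natDegree_C] at this
    omega
  obtain ⟨k, hk⟩ := exists_eval_add_mul_ne_zero hg x₀ (mul_ne_zero ha hN)
  set x := x₀ + a * N * k
  -- `f x ≡ f x₀ = a (mod a N k)`, so `f x = a w` with `w ≡ 1 (mod N)`; `w ≠ ±1` by choice of `k`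
  obtain ⟨m, hm⟩ : a * N * k ∣ f.eval x - a := by simpa [x, a] using sub_dvd_eval_sub x x₀ f
  set w := 1 + N * k * m
  have hfw : f.eval x = a * w := by linear_combination hm
  have hw : w.natAbs ≠ 1 := by
    intro h
    apply hk
    rw [eval_sub, eval_pow, eval_C, hfw, mul_pow, ← Int.natAbs_sq w, h]
    ring
  obtain ⟨P, hP, hPw⟩ := Int.exists_prime_and_dvd hw
  refine ⟨P.natAbs, Int.prime_iff_natAbs_prime.mp hP, fun hPN => hP.not_isUnit ?_, x, ?_⟩
  · have : P ∣ w - N * (k * m) := dvd_sub hPw ((Int.natAbs_dvd.mp hPN).mul_right _)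
    exact isUnit_of_dvd_one (by simpa [w, mul_assoc] using this)
  · rw [hfw, Int.natAbs_dvd]
    exact hPw.mul_left a

theorem infinite_setOf_prime_exists_aeval_eq_zero (f : ℤ[X]) (hf : 0 < f.natDegree) :
    {p : ℕ | p.Prime ∧ ∃ t : ZMod p, aeval t f = 0}.Infinite := by
  refine Set.infinite_of_forall_exists_gt fun M => ?_
  obtain ⟨p, hp, hpM, n, hpn⟩ :=
    f.exists_prime_not_dvd_dvd_eval hf (N := M.factorial) (by positivity)
  refine ⟨p, ⟨hp, n, ?_⟩, ?_⟩
  · change aeval (algebraMap ℤ (ZMod p) n) f = 0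
    rwa [aeval_algebraMap_apply_eq_algebraMap_eval, algebraMap_int_eq, eq_intCast,
      ZMod.intCast_zmod_eq_zero_iff_dvd]
  · by_contra! h
    exact hpM (Int.natCast_dvd_natCast.mpr (hp.dvd_factorial.mpr h))

theorem Splits.of_scaleRoots {F : Type*} [Field F] {f : F[X]} {r : F} (hr : r ≠ 0)
    (h : (f.scaleRoots r).Splits) : f.Splits := by
  simpa [← scaleRoots_mul, mul_inv_cancel₀ hr] using h.scaleRoots r⁻¹

theorem Monic.splits_map_scaleRoots_of_mul_roots_mem {R K : Type*} [CommRing R]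
    [Field K] [Algebra R K] (S : Subalgebra R K) {q : R[X]} (hq : q.Monic)
    (hsplit : (q.map (algebraMap R K)).Splits) {r : R} (hr : algebraMap R K r ≠ 0)
    (hroots : ∀ x ∈ (q.map (algebraMap R K)).roots, algebraMap R K r * x ∈ S) :
    ((q.scaleRoots r).map (algebraMap R S)).Splits := by
  have hmap : ((q.scaleRoots r).map (algebraMap R S)).map (S.val : S →+* K) =
      (q.map (algebraMap R K)).scaleRoots (algebraMap R K r) := by
    rw [map_map, AlgHom.comp_algebraMap, map_scaleRoots]
    simp [hq.leadingCoeff]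
  refine Splits.of_splits_map_of_injective Subtype.val_injective
    (hmap ▸ hsplit.scaleRoots _) fun a ha => ?_
  rw [hmap, roots_scaleRoots _ hr.isUnit, Multiset.mem_map] at ha
  obtain ⟨x, hx, rfl⟩ := ha
  exact ⟨⟨_, hroots x hx⟩, rfl⟩

end Polynomial

theorem exists_isIntegral_int_adjoin_eq_top (K : Type*) [Field K] [Algebra ℚ K]
    [FiniteDimensional ℚ K] : ∃ θ : K, IsIntegral ℤ θ ∧ Algebra.adjoin ℚ {θ} = ⊤ := by
  obtain ⟨θ, hθ⟩ := Field.exists_primitive_element ℚ K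
  have hθalg : IsAlgebraic ℤ θ :=
    (IsFractionRing.isAlgebraic_iff ℤ ℚ K).mpr (Algebra.IsAlgebraic.isAlgebraic θ)
  obtain ⟨y, hy, hint⟩ := hθalg.exists_integral_multiple
  refine ⟨y • θ, hint, top_le_iff.mp ?_⟩
  have hθy : θ = (y : ℚ)⁻¹ • (y • θ) := by
    rw [← Int.cast_smul_eq_zsmul ℚ, smul_smul, inv_mul_cancel₀ (by exact_mod_cast hy), one_smul]
  have hθ_mem := Subalgebra.smul_mem _ (Algebra.self_mem_adjoin_singleton ℚ (y • θ)) (y : ℚ)⁻¹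
  rw [← hθy] at hθ_mem
  calc (⊤ : Subalgebra ℚ K)
      = (IntermediateField.adjoin ℚ {θ}).toSubalgebra := by
        rw [hθ, IntermediateField.top_toSubalgebra]
    _ = Algebra.adjoin ℚ {θ} := IntermediateField.adjoin_simple_toSubalgebra_of_isAlgebraic
        (Algebra.IsAlgebraic.isAlgebraic θ)
    _ ≤ Algebra.adjoin ℚ {y • θ} := Algebra.adjoin_le (Set.singleton_subset_iff.mpr hθ_mem)

theorem exists_int_mul_mem_adjoin_int_of_mem_adjoin_rat {K : Type*} [CommRing K] [Algebra ℚ K]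
    (θ : K) {x : K} (hx : x ∈ Algebra.adjoin ℚ {θ}) :
    ∃ d : ℤ, d ≠ 0 ∧ (d : K) * x ∈ Algebra.adjoin ℤ {θ} := by
  obtain ⟨g, rfl⟩ := (Algebra.adjoin_singleton_eq_range_aeval ℚ θ ▸ hx : _)
  obtain ⟨d, hd, hg⟩ := IsLocalization.integerNormalization_spec (nonZeroDivisors ℤ) g
  refine ⟨d, nonZeroDivisors.ne_zero hd, ?_⟩
  rw [Algebra.adjoin_singleton_eq_range_aeval]
  refine ⟨IsLocalization.integerNormalization (nonZeroDivisors ℤ) g, ?_⟩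
  simp only [AlgHom.toRingHom_eq_coe, RingHom.coe_coe]
  rw [← aeval_map_algebraMap ℚ, hg, map_zsmul, zsmul_eq_mul]

theorem Subalgebra.exists_common_int_mul_mem {A : Type*} [CommRing A] (S : Subalgebra ℤ A)
    (s : Finset A) (h : ∀ x ∈ s, ∃ d : ℤ, d ≠ 0 ∧ (d : A) * x ∈ S) :
    ∃ D : ℤ, D ≠ 0 ∧ ∀ x ∈ s, (D : A) * x ∈ S := by
  classical
  choose! d hd0 hd using h
  refine ⟨∏ x ∈ s, d x, Finset.prod_ne_zero_iff.mpr hd0, fun x hx => ?_⟩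
  rw [← Finset.mul_prod_erase s d hx, Int.cast_mul, mul_right_comm]
  exact S.mul_mem (hd x hx) (S.intCast_mem _)

theorem Polynomial.Monic.exists_splits_map_scaleRoots_adjoinRoot {q : ℤ[X]} (hq : q.Monic) :
    ∃ f : ℤ[X], 0 < f.natDegree ∧
      ∃ D : ℤ, D ≠ 0 ∧ ((q.scaleRoots D).map (algebraMap ℤ (AdjoinRoot f))).Splits := by
  classical
  let K := (q.map (algebraMap ℤ ℚ)).SplittingField
  obtain ⟨θ, hθ, hθtop⟩ := exists_isIntegral_int_adjoin_eq_top K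
  have hsplit : (q.map (algebraMap ℤ K)).Splits := by
    rw [IsScalarTower.algebraMap_eq ℤ ℚ K, ← map_map]
    exact SplittingField.splits _
  obtain ⟨D, hD0, hD⟩ := (Algebra.adjoin ℤ {θ}).exists_common_int_mul_mem
    (q.map (algebraMap ℤ K)).roots.toFinset fun x _ =>
      exists_int_mul_mem_adjoin_int_of_mem_adjoin_rat θ (hθtop ▸ Algebra.mem_top)
  refine ⟨minpoly ℤ θ, minpoly.natDegree_pos hθ, D, hD0, ?_⟩
  have hsplit_adjoin := hq.splits_map_scaleRoots_of_mul_roots_mem _ hsplit (by simpa using hD0)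
    fun x hx => hD x (Multiset.mem_toFinset.mpr hx)
  exact hsplit_adjoin.of_algHom (minpoly.equivAdjoin hθ).symm.toAlgHom

/-- A monic integer polynomial splits into linear factors modulo infinitely many primes. -/
theorem monic_int_poly_splits_mod_infinitely_many_primes
    (q : Polynomial ℤ) (hq : q.Monic) :
    {p : ℕ | p.Prime ∧
      ∃ s : Multiset (ZMod p),
        q.map (Int.castRingHom (ZMod p)) = (s.map (fun a => X - C a)).prod}.Infinite := by
  obtain ⟨f, hf, D, hD0, hsplit⟩ := hq.exists_splits_map_scaleRoots_adjoinRoot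
  have hbad : {p : ℕ | (p : ℤ) ∣ D}.Finite :=
    (Nat.divisors D.natAbs).finite_toSet.subset fun p hp =>
      Nat.mem_divisors.mpr ⟨Int.natCast_dvd.mp hp, by simpa using hD0⟩
  refine ((f.infinite_setOf_prime_exists_aeval_eq_zero hf).sdiff hbad).mono ?_
  rintro p ⟨⟨hp, t, ht⟩, hpD⟩
  have : Fact p.Prime := ⟨hp⟩
  have hD : (D : ZMod p) ≠ 0 := by rwa [Ne, ZMod.intCast_zmod_eq_zero_iff_dvd]
  have hsplit_p := hsplit.of_algHom (AdjoinRoot.lift (algebraMap ℤ (ZMod p)) t ht).toIntAlgHom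
  rw [map_scaleRoots _ _ _ (by simp [hq.leadingCoeff]), algebraMap_int_eq, eq_intCast] at hsplit_p
  exact ⟨hp, _, (hsplit_p.of_scaleRoots hD).eq_prod_roots_of_monic (hq.map _)⟩
end
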